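/- arXiv:2002.00242 — 3 statements merged into one kernel-verified Lean document; each statement's English description precedes it below -/
import Mathlib

section
/- Let (R,𝔪) be a Noetherian local ring of prime characteristic p > 0, let c ∈ 𝔪, and let W be an Artinian R-module equipped with a Frobenius action F : W → W, i.e., an additive map satisfying F(r•w) = r^p•F(w) for all r ∈ R and w ∈ W. If the map w ↦ c•F(w) is injective, then there exists an integer N ≥ 1 such that for every δ ∈ 𝔪^N the map w ↦ (c+δ)•F(w) is injective. -/
/-!
Let `J` be the ideal generated by the `p`-th powers of elements of `𝔪`. As `𝔪` is finitely
generated and `𝔪 ⊆ √J`, some power `𝔪 ^ n` lies in `J`. Suppose `(c + δ) • F x = 0` with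
`δ ∈ J` and `x ≠ 0`. The chain `𝔪 ^ k • R x` stabilises, so it reaches `0` by Nakayama, and
hence `R x` contains some `y = a • x ≠ 0` killed by `𝔪`. Then `(c + δ) • F y = a ^ p • 0 = 0`,
while `r ^ p • F y = F (r • y) = 0` for `r ∈ 𝔪` gives `δ • F y = 0`. So `c • F y = 0`,
contradicting the injectivity of `w ↦ c • F w`.
-/

open Function IsLocalRing

theorem Ideal.exists_pow_le_span_image_pow {R : Type*} [CommRing R] {I : Ideal R} (hI : I.FG)
    (p : ℕ) : ∃ n, I ^ n ≤ Ideal.span ((· ^ p) '' I) :=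
  Ideal.exists_pow_le_of_le_radical_of_fg (fun r hr => ⟨p, Ideal.subset_span ⟨r, hr, rfl⟩⟩) hI

section Module

variable {R W : Type*} [CommRing R] [AddCommGroup W] [Module R W]

theorem Submodule.exists_ne_zero_forall_smul_eq_zero_of_pow_smul_eq_bot (I : Ideal R) :
    ∀ (k : ℕ) {C : Submodule R W}, C ≠ ⊥ → I ^ k • C = ⊥ →
      ∃ y ∈ C, y ≠ 0 ∧ ∀ r ∈ I, r • y = 0
  | 0, C, hC, hk => absurd (by simpa using hk) hC
  | k + 1, C, hC, hk => by
    by_cases hIC : I • C = ⊥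
    · obtain ⟨y, hyC, hy⟩ := (Submodule.ne_bot_iff C).mp hC
      exact ⟨y, hyC, hy, fun r hr => by
        simpa [hIC] using Submodule.smul_mem_smul hr hyC⟩
    · rw [pow_succ, Submodule.mul_smul] at hk
      obtain ⟨y, hyC, hy⟩ := exists_ne_zero_forall_smul_eq_zero_of_pow_smul_eq_bot I k hIC hk
      exact ⟨y, Submodule.smul_le_right hyC, hy⟩

variable [IsNoetherianRing R] [IsLocalRing R] [IsArtinian R W]

theorem IsArtinian.exists_pow_maximalIdeal_smul_eq_bot {C : Submodule R W} (hC : C.FG) :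
    ∃ k, maximalIdeal R ^ k • C = ⊥ := by
  obtain ⟨k, hk⟩ := IsArtinian.monotone_stabilizes
    ⟨fun k => OrderDual.toDual (maximalIdeal R ^ k • C), fun _ _ hkl =>
      Submodule.smul_mono_left (Ideal.pow_le_pow_right hkl)⟩
  refine ⟨k, Submodule.eq_bot_of_le_smul_of_le_jacobson_bot (maximalIdeal R) _ ?_ ?_
    (maximalIdeal_le_jacobson ⊥)⟩
  · exact Submodule.FG.smul (IsNoetherian.noetherian _) hC
  · rw [← Submodule.mul_smul, ← pow_succ']
    exact le_of_eq (congrArg OrderDual.ofDual (hk (k + 1) k.le_succ))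

theorem IsArtinian.exists_smul_ne_zero_forall_maximalIdeal_smul_eq_zero {x : W} (hx : x ≠ 0) :
    ∃ a : R, a • x ≠ 0 ∧ ∀ r ∈ maximalIdeal R, r • a • x = 0 := by
  obtain ⟨k, hk⟩ := exists_pow_maximalIdeal_smul_eq_bot (Submodule.fg_span_singleton (R := R) x)
  obtain ⟨y, hyx, hy0, hy⟩ := Submodule.exists_ne_zero_forall_smul_eq_zero_of_pow_smul_eq_bot
    _ k (by simpa using hx) hk
  obtain ⟨a, rfl⟩ := Submodule.mem_span_singleton.mp hyx
  exact ⟨a, hy0, hy⟩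

end Module

section TwistedFrobenius

variable {R W : Type*} [CommRing R] [AddCommGroup W] [Module R W] {p : ℕ} {F : W →+ W}

theorem smul_apply_eq_zero_of_mem_span_image_pow (hF : ∀ (r : R) (w : W), F (r • w) = r ^ p • F w)
    {I : Ideal R} {y : W} (hy : ∀ r ∈ I, r • y = 0) {δ : R} (hδ : δ ∈ Ideal.span ((· ^ p) '' I)) :
    δ • F y = 0 := by
  suffices Ideal.span ((· ^ p) '' I) ≤ (R ∙ F y).annihilator from
    (Submodule.mem_annihilator_span_singleton _ _).mp (this hδ)
  rw [Ideal.span_le]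
  rintro _ ⟨r, hr, rfl⟩
  rw [SetLike.mem_coe, Submodule.mem_annihilator_span_singleton, ← hF, hy r hr, map_zero]

theorem injective_add_smul_of_mem_span_image_pow
    (hF : ∀ (r : R) (w : W), F (r • w) = r ^ p • F w) (I : Ideal R)
    (hsocle : ∀ x : W, x ≠ 0 → ∃ a : R, a • x ≠ 0 ∧ ∀ r ∈ I, r • a • x = 0)
    {c δ : R} (hc : Injective (c • F)) (hδ : δ ∈ Ideal.span ((· ^ p) '' I)) :
    Injective ((c + δ) • F) := by
  rw [injective_iff_map_eq_zero] at hc ⊢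
  intro x hx
  by_contra hx0
  obtain ⟨a, hax, hI⟩ := hsocle x hx0
  have hcδ : (c + δ) • F (a • x) = 0 := by
    rw [hF, smul_comm, ← AddMonoidHom.smul_apply, hx, smul_zero]
  rw [add_smul, smul_apply_eq_zero_of_mem_span_image_pow hF hI hδ, add_zero] at hcδ
  exact hax (hc _ hcδ)

end TwistedFrobenius

theorem injectivity_of_twisted_frobenius_is_stable_general
    (p : ℕ)
    (R : Type*) [CommRing R] [IsNoetherianRing R] [IsLocalRing R]
    (c : R)
    (W : Type*) [AddCommGroup W] [Module R W] [IsArtinian R W]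
    (F : W → W)
    (hFadd : ∀ a b : W, F (a + b) = F a + F b)
    (hFsmul : ∀ (r : R) (w : W), F (r • w) = r ^ p • F w)
    (hinj : Function.Injective fun w => c • F w) :
    ∃ N : ℕ, 1 ≤ N ∧ ∀ δ ∈ IsLocalRing.maximalIdeal R ^ N,
      Function.Injective fun w => (c + δ) • F w := by
  obtain ⟨n, hn⟩ := Ideal.exists_pow_le_span_image_pow (IsNoetherian.noetherian (maximalIdeal R)) p
  refine ⟨n + 1, Nat.le_add_left 1 n, fun δ hδ => ?_⟩
  exact injective_add_smul_of_mem_span_image_pow (F := AddMonoidHom.mk' F hFadd) hFsmul _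
    (fun _ => IsArtinian.exists_smul_ne_zero_forall_maximalIdeal_smul_eq_zero) hinj
    (hn (Ideal.pow_le_pow_right n.le_succ hδ))

/-- Let `(R,𝔪)` be a Noetherian local ring of prime characteristic `p > 0`,
`c ∈ 𝔪`, and `W` an Artinian `R`-module with a Frobenius action `F : W → W`
(an additive map with `F (r • w) = r ^ p • F w`).  If `w ↦ c • F w` is injective, then there
is an integer `N ≥ 1` such that `w ↦ (c + δ) • F w` is injective for every `δ ∈ 𝔪 ^ N`. -/
theorem injectivity_of_twisted_frobenius_is_stable
    (p : ℕ) (hp : p.Prime)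
    (R : Type*) [CommRing R] [IsNoetherianRing R] [IsLocalRing R] [CharP R p]
    (c : R) (hc : c ∈ IsLocalRing.maximalIdeal R)
    (W : Type*) [AddCommGroup W] [Module R W] [IsArtinian R W]
    (F : W → W)
    (hFadd : ∀ a b : W, F (a + b) = F a + F b)
    (hFsmul : ∀ (r : R) (w : W), F (r • w) = r ^ p • F w)
    (hinj : Function.Injective fun w => c • F w) :
    ∃ N : ℕ, 1 ≤ N ∧ ∀ δ ∈ IsLocalRing.maximalIdeal R ^ N,
      Function.Injective fun w => (c + δ) • F w :=
  injectivity_of_twisted_frobenius_is_stable_general p R c W F hFadd hFsmul hinj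
end

section
/- Let (R,𝔪) be a Noetherian local ring, let x ∈ 𝔪, and let W be an Artinian R-module such that the quotient module W/xW has finite length. Then there exists an integer N ≥ 1 such that x•W = (x+δ)•W (as R-submodules of W) for all δ ∈ 𝔪^N. -/
/-!
Write `W` as a finite sum of sup-irreducible submodules `U`. Fitting's theorem makes every scalar
act on such a `U` either surjectively or nilpotently. The components on which `x` is surjective
span a submodule `V ⊆ xW` with `xᵗW ⊆ V` for some `t`, and Nakayama's theorem applied to the
finite-length module `W/xW` gives `𝔪ᵏW ⊆ xW`, hence `𝔪ᵏᵗW ⊆ V`. On a surjective component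
`x ∉ √(ann U)`, so by Krull's intersection theorem `x + δ ∉ √(ann U)` for `δ ∈ 𝔪ᴺ`, `N ≫ 0`:
then `x + δ` is surjective on every such component, and `V ⊆ (x + δ)W`. Both `xW` and
`(x + δ)W` thus contain `V ⊇ δW`, which forces them to be equal.
-/

open Filter IsLocalRing Pointwise Submodule

section

variable {R W : Type*} [CommRing R] [AddCommGroup W] [Module R W]

theorem Submodule.range_lsmul_eq_smul_top (x : R) :
    LinearMap.range (LinearMap.lsmul R W x) = x • ⊤ := by
  ext w
  simp [mem_smul_pointwise_iff_exists, eq_comm]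

theorem Submodule.pow_smul_le_pow_smul {I J : Ideal R} {N : Submodule R W} (h : I • N ≤ J • N)
    (n : ℕ) : I ^ n • N ≤ J ^ n • N := by
  induction n with
  | zero => simp
  | succ n ih =>
    calc I ^ (n + 1) • N = I ^ n • I • N := by rw [pow_succ, Submodule.mul_smul]
      _ ≤ I ^ n • J • N := smul_mono_right _ h
      _ = J • I ^ n • N := by rw [← Submodule.mul_smul, ← Submodule.mul_smul, mul_comm]
      _ ≤ J • J ^ n • N := smul_mono_right _ ih
      _ = J ^ (n + 1) • N := by rw [← Submodule.mul_smul, pow_succ']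

theorem Submodule.pow_smul_top_le_of_smul_top_le {I : Ideal R} {x : R}
    (h : I • (⊤ : Submodule R W) ≤ x • ⊤) (n : ℕ) :
    I ^ n • (⊤ : Submodule R W) ≤ x ^ n • ⊤ := by
  rw [← ideal_span_singleton_smul] at h ⊢
  rw [← Ideal.span_singleton_pow]
  exact pow_smul_le_pow_smul h n

theorem IsLocalRing.exists_maximalIdeal_pow_smul_top_eq_bot [IsLocalRing R] [IsNoetherian R W]
    [IsArtinian R W] : ∃ k, maximalIdeal R ^ k • (⊤ : Submodule R W) = ⊥ := by
  obtain ⟨k, hk⟩ := IsArtinian.monotone_stabilizes (R := R) (M := W)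
    ⟨fun n => OrderDual.toDual (maximalIdeal R ^ n • ⊤),
      fun m n hmn => smul_mono_left (Ideal.pow_le_pow_right hmn)⟩
  refine ⟨k, eq_bot_of_le_smul_of_le_jacobson_bot (maximalIdeal R) _ (IsNoetherian.noetherian _)
    ?_ (maximalIdeal_le_jacobson ⊥)⟩
  rw [← Submodule.mul_smul, ← pow_succ']
  exact le_of_eq (hk _ k.le_succ)

theorem IsLocalRing.exists_maximalIdeal_pow_smul_top_le [IsLocalRing R] {P : Submodule R W}
    (h : IsFiniteLength R (W ⧸ P)) : ∃ k, maximalIdeal R ^ k • (⊤ : Submodule R W) ≤ P := by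
  obtain ⟨_, _⟩ := isFiniteLength_iff_isNoetherian_isArtinian.mp h
  obtain ⟨k, hk⟩ := exists_maximalIdeal_pow_smul_top_eq_bot (R := R) (W := W ⧸ P)
  refine ⟨k, ?_⟩
  rw [← P.ker_mkQ, LinearMap.le_ker_iff_map, map_smul'', Submodule.map_top, range_mkQ, hk]

theorem IsLocalRing.eventually_add_notMem [IsNoetherianRing R] [IsLocalRing R] {I : Ideal R}
    {x : R} (hx : x ∉ I) : ∀ᶠ n in atTop, ∀ δ ∈ maximalIdeal R ^ n, x + δ ∉ I := by
  obtain ⟨N, hN⟩ :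
      ∃ N, Ideal.Quotient.mk I x ∉ maximalIdeal R ^ N • (⊤ : Submodule R (R ⧸ I)) := by
    by_contra! h
    have hmem := (Submodule.mem_iInf _).2 h
    rw [Ideal.iInf_pow_smul_eq_bot_of_isLocalRing _ (maximalIdeal.isMaximal R).ne_top,
      Submodule.mem_bot, Ideal.Quotient.eq_zero_iff_mem] at hmem
    exact hx hmem
  refine eventually_atTop.2 ⟨N, fun n hn δ hδ hxδ => hN ?_⟩
  have hxq : Ideal.Quotient.mk I x = (-δ) • 1 := by
    rw [Algebra.smul_def, mul_one, Ideal.Quotient.algebraMap_eq, Ideal.Quotient.eq,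
      sub_neg_eq_add]
    exact hxδ
  rw [hxq]
  exact smul_mem_smul (neg_mem (Ideal.pow_le_pow_right hn hδ)) trivial

theorem Submodule.pointwise_smul_eq_bot_of_mem_annihilator {r : R} {N : Submodule R W}
    (h : r ∈ N.annihilator) : r • N = ⊥ := by
  rw [eq_bot_iff]
  rintro _ ⟨n, hn, rfl⟩
  exact mem_annihilator.1 h n hn

namespace SupIrred

variable {U : Submodule R W}

theorem smul_eq_or_mem_radical_annihilator [IsArtinian R W] (hU : SupIrred U) (r : R) :
    r • U = U ∨ r ∈ U.annihilator.radical := by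
  obtain ⟨n, hn, hn0⟩ := ((LinearMap.eventually_codisjoint_ker_pow_range_pow
    (algebraMap R (Module.End R U) r)).and (eventually_ne_atTop 0)).exists
  rw [← map_pow] at hn
  set g := algebraMap R (Module.End R U) (r ^ n)
  have hsup : (LinearMap.ker g).map U.subtype ⊔ (LinearMap.range g).map U.subtype = U := by
    rw [← Submodule.map_sup, hn.eq_top, map_subtype_top]
  rcases hU.2 hsup with hker | hrange
  · right
    refine ⟨n, mem_annihilator.2 fun u hu => ?_⟩
    rw [← hker] at hu
    obtain ⟨v, hv, rfl⟩ := hu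
    exact congrArg Subtype.val ((Module.algebraMap_end_apply R R U (r ^ n) v).symm.trans hv)
  · left
    have hpow : r ^ n • U = U := by
      refine le_antisymm (smul_le_self_of_tower _ _) (hrange.symm.le.trans ?_)
      rintro _ ⟨_, ⟨v, rfl⟩, rfl⟩
      exact smul_mem_pointwise_smul _ _ _ v.2
    apply le_antisymm (smul_le_self_of_tower r U)
    calc U = r • r ^ (n - 1) • U := by
          rw [← mul_smul, ← pow_succ', Nat.sub_add_cancel (Nat.pos_of_ne_zero hn0), hpow]
      _ ≤ r • U := smul_le_smul_left _ (smul_le_self_of_tower _ _)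

theorem notMem_radical_annihilator (hU : SupIrred U) {r : R} (h : r • U = U) :
    r ∉ U.annihilator.radical := by
  rintro ⟨n, hn⟩
  have hpow : r ^ n • U = U := pow_mem (show r ∈ MulAction.stabilizerSubmonoid R U from h) n
  exact hU.ne_bot (hpow ▸ pointwise_smul_eq_bot_of_mem_annihilator hn)

theorem eventually_add_smul_eq [IsNoetherianRing R] [IsLocalRing R] [IsArtinian R W]
    (hU : SupIrred U) {x : R} (hx : x • U = U) :
    ∀ᶠ n in atTop, ∀ δ ∈ maximalIdeal R ^ n, (x + δ) • U = U := by
  filter_upwards [eventually_add_notMem (hU.notMem_radical_annihilator hx)] with n hn δ hδ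
  exact (hU.smul_eq_or_mem_radical_annihilator _).resolve_right (hn δ hδ)

end SupIrred

theorem Submodule.exists_pow_smul_top_le_sup_filter [IsArtinian R W]
    [DecidableEq (Submodule R W)] {s : Finset (Submodule R W)} (hs : s.sup id = ⊤)
    (hirr : ∀ ⦃U⦄, U ∈ s → SupIrred U) (x : R) :
    ∃ t, x ^ t • (⊤ : Submodule R W) ≤ {U ∈ s | x • U = U}.sup id := by
  have hbad : ∀ U ∈ s, ∀ᶠ t in atTop, x • U = U ∨ x ^ t ∈ U.annihilator := by
    intro U hU
    rcases (hirr hU).smul_eq_or_mem_radical_annihilator x with h | ⟨n, hn⟩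
    · exact Eventually.of_forall fun _ => Or.inl h
    · exact eventually_atTop.2 ⟨n, fun t ht => Or.inr (Ideal.pow_mem_of_pow_mem _ hn ht)⟩
  obtain ⟨t, ht⟩ := ((eventually_all_finset s).2 hbad).exists
  refine ⟨t, ?_⟩
  rw [← hs, Finset.sup_eq_iSup, smul_iSup']
  refine iSup_le fun U => ?_
  rw [smul_iSup']
  refine iSup_le fun hU => ?_
  rcases ht U hU with h | h
  · exact (smul_le_self_of_tower _ _).trans
      (Finset.le_sup (f := id) (Finset.mem_filter.2 ⟨hU, h⟩))
  · simp [pointwise_smul_eq_bot_of_mem_annihilator h]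

theorem Submodule.smul_top_eq_add_smul_top {V : Submodule R W} {x δ : R} (hx : V ≤ x • ⊤)
    (hxδ : V ≤ (x + δ) • ⊤) (hδ : δ • ⊤ ≤ V) : x • (⊤ : Submodule R W) = (x + δ) • ⊤ := by
  have hδw : ∀ w : W, δ • w ∈ V := fun w => hδ (smul_mem_pointwise_smul w δ ⊤ trivial)
  apply le_antisymm
  · intro _ hw
    obtain ⟨w, -, rfl⟩ := (mem_smul_pointwise_iff_exists _ _ _).1 hw
    have : x • w = (x + δ) • w - δ • w := by rw [add_smul, add_sub_cancel_right]
    rw [this]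
    exact sub_mem (smul_mem_pointwise_smul w _ ⊤ trivial) (hxδ (hδw w))
  · intro _ hw
    obtain ⟨w, -, rfl⟩ := (mem_smul_pointwise_iff_exists _ _ _).1 hw
    rw [add_smul]
    exact add_mem (smul_mem_pointwise_smul w _ ⊤ trivial) (hx (hδw w))

theorem Submodule.finset_sup_le_smul_top {s : Finset (Submodule R W)} {r : R}
    (h : ∀ U ∈ s, r • U = U) : s.sup id ≤ r • ⊤ :=
  Finset.sup_le fun U hU => (h U hU).symm.le.trans (smul_le_smul_left _ le_top)

end

theorem smul_submodule_stable_of_finiteLength_quotient_general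
    (R : Type*) [CommRing R] [IsNoetherianRing R] [IsLocalRing R]
    (x : R)
    (W : Type*) [AddCommGroup W] [Module R W] [IsArtinian R W]
    (hfl : IsFiniteLength R (W ⧸ LinearMap.range (LinearMap.lsmul R W x))) :
    ∃ N : ℕ, 1 ≤ N ∧ ∀ δ ∈ IsLocalRing.maximalIdeal R ^ N,
      LinearMap.range (LinearMap.lsmul R W x)
        = LinearMap.range (LinearMap.lsmul R W (x + δ)) := by
  classical
  simp only [range_lsmul_eq_smul_top]
  obtain ⟨k, hk⟩ := exists_maximalIdeal_pow_smul_top_le hfl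
  rw [range_lsmul_eq_smul_top] at hk
  obtain ⟨s, hs, hirr⟩ := exists_supIrred_decomposition (⊤ : Submodule R W)
  obtain ⟨t, ht⟩ := exists_pow_smul_top_le_sup_filter hs hirr x
  set good := {U ∈ s | x • U = U}
  have hgood : ∀ᶠ n in atTop, ∀ U ∈ good, ∀ δ ∈ maximalIdeal R ^ n, (x + δ) • U = U :=
    (eventually_all_finset good).2 fun U hU =>
      (hirr (Finset.mem_filter.1 hU).1).eventually_add_smul_eq (Finset.mem_filter.1 hU).2
  obtain ⟨N, hNgood, hNkt⟩ := (hgood.and (eventually_ge_atTop (k * t + 1))).exists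
  refine ⟨N, by omega, fun δ hδ => smul_top_eq_add_smul_top
    (finset_sup_le_smul_top fun U hU => (Finset.mem_filter.1 hU).2)
    (finset_sup_le_smul_top fun U hU => hNgood U hU δ hδ) ?_⟩
  calc δ • (⊤ : Submodule R W) = Ideal.span {δ} • ⊤ := (ideal_span_singleton_smul δ ⊤).symm
    _ ≤ maximalIdeal R ^ (k * t) • ⊤ :=
      smul_mono_left <| (Ideal.span_singleton_le_iff_mem _).2 <|
        Ideal.pow_le_pow_right (by omega) hδ
    _ ≤ x ^ t • ⊤ := by rw [pow_mul]; exact pow_smul_top_le_of_smul_top_le hk t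
    _ ≤ good.sup id := ht

/-- Let `(R,𝔪)` be a Noetherian local ring, `x ∈ 𝔪`, and `W` an Artinian
`R`-module such that `W/xW` has finite length.  Then there is an integer `N ≥ 1` such that
`x • W = (x + δ) • W` (as submodules of `W`, realized as ranges of the scalar multiplication
maps) for every `δ ∈ 𝔪 ^ N`. -/
theorem smul_submodule_stable_of_finiteLength_quotient
    (R : Type*) [CommRing R] [IsNoetherianRing R] [IsLocalRing R]
    (x : R) (hx : x ∈ IsLocalRing.maximalIdeal R)
    (W : Type*) [AddCommGroup W] [Module R W] [IsArtinian R W]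
    (hfl : IsFiniteLength R (W ⧸ LinearMap.range (LinearMap.lsmul R W x))) :
    ∃ N : ℕ, 1 ≤ N ∧ ∀ δ ∈ IsLocalRing.maximalIdeal R ^ N,
      LinearMap.range (LinearMap.lsmul R W x)
        = LinearMap.range (LinearMap.lsmul R W (x + δ)) :=
  smul_submodule_stable_of_finiteLength_quotient_general R x W hfl
end

section
/- Let (R,𝔪) be an F-finite Noetherian local ring of prime characteristic p > 0 and let x ∈ 𝔪 be a non-zerodivisor on R. Assume that R is compatibly F-pure along the ideal (x). Then there exists an integer N ≥ 1 such that for every δ ∈ 𝔪^N, R is compatibly F-pure along the ideal (x+δ); in particular, for every δ ∈ 𝔪^N the quotient ring R/(x+δ) admits a Cartier map ψ with ψ(1) = 1, i.e., R/(x+δ) is F-pure. -/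
open IsLocalRing

/-- A `p^{-e}`-linear map on `R`: an additive map `φ : R → R` with
`φ (r^{p^e} * s) = r * φ s` for all `r, s`. -/
def IsPeLinearMap (p e : ℕ) {R : Type*} [CommRing R] (φ : R → R) : Prop :=
  (∀ a b : R, φ (a + b) = φ a + φ b) ∧ ∀ r s : R, φ (r ^ p ^ e * s) = r * φ s

/-- `R` is F-finite: the Frobenius endomorphism `r ↦ r ^ p` is a finite ring map. -/
def IsFFinite (p : ℕ) (R : Type*) [CommRing R] : Prop :=
  ∃ f : R →+* R, (∀ r, f r = r ^ p) ∧ f.Finite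

/-- `R` is compatibly F-pure along the ideal `a`: there is a Cartier map
(a `p^{-e}`-linear map for some `e ≥ 1`) `φ : R → R` with `φ 1 = 1` and `φ a ⊆ a`. -/
def CompatiblyFPureAlong (p : ℕ) {R : Type*} [CommRing R] (a : Ideal R) : Prop :=
  ∃ (e : ℕ) (φ : R → R), 1 ≤ e ∧ IsPeLinearMap p e φ ∧ φ 1 = 1 ∧ ∀ y ∈ a, φ y ∈ a

/-- `A` admits a Cartier map `ψ` with `ψ 1 = 1` (for F-finite rings this is F-purity). -/
def AdmitsCartierSplitting (p : ℕ) (A : Type*) [CommRing A] : Prop :=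
  ∃ (e : ℕ) (ψ : A → A), 1 ≤ e ∧ IsPeLinearMap p e ψ ∧ ψ 1 = 1

/-!
Write `q = p ^ e` for the exponent of the given compatible splitting `φ`. Since `φ (x)` lies
in `(x)` and `x` is a non-zerodivisor, `φ (x s) = x α(s)` for a `p^{-e}`-linear `α`, and
`α (x ^ (q - 1)) = φ (x ^ q) / x = 1`. For any `y`, the map `s ↦ α (y ^ (q - 1) s)` sends
`y t` to `y α(t)`, so it preserves `(y)`; once `α (y ^ (q - 1))` is a unit, dividing by it
gives a compatible splitting along `(y)`. Because `𝔪` is finitely generated, some `𝔪 ^ N`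
lies in the Frobenius power `𝔪^[q]`, which `α` maps into `𝔪`. For `y = x + δ` with
`δ ∈ 𝔪 ^ N` this makes `α (y ^ (q - 1)) ≡ α (x ^ (q - 1)) = 1` modulo `𝔪`, a unit.
Finally a compatible splitting along `I` descends to `R ⧸ I`.
-/

namespace IsPeLinearMap

variable {p e : ℕ} {R : Type*} [CommRing R] {φ : R → R}

lemma map_zero (hφ : IsPeLinearMap p e φ) : φ 0 = 0 := by
  simpa using hφ.1 0 0

lemma map_sub (hφ : IsPeLinearMap p e φ) (a b : R) : φ (a - b) = φ a - φ b := by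
  rw [eq_sub_iff_add_eq, ← hφ.1, sub_add_cancel]

lemma one_le_pow_of_map_one [Nontrivial R] (hφ : IsPeLinearMap p e φ) (h1 : φ 1 = 1) :
    1 ≤ p ^ e := by
  refine Nat.one_le_iff_ne_zero.2 fun hq => ?_
  have := hφ.2 0 1
  rw [hq, pow_zero, one_mul, zero_mul, h1] at this
  exact one_ne_zero this

lemma mul_comp_mul (hφ : IsPeLinearMap p e φ) (u c : R) :
    IsPeLinearMap p e (fun s => u * φ (c * s)) := by
  refine ⟨fun a b => ?_, fun r s => ?_⟩ <;> beta_reduce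
  · rw [mul_add, hφ.1, mul_add]
  · rw [mul_left_comm, hφ.2, mul_left_comm]

lemma exists_map_mul_eq_mul {x : R} (hφ : IsPeLinearMap p e φ) (hx : x ∈ nonZeroDivisors R)
    (hφx : ∀ y ∈ Ideal.span {x}, φ y ∈ Ideal.span {x}) :
    ∃ α : R → R, IsPeLinearMap p e α ∧ ∀ s, φ (x * s) = x * α s := by
  choose α hα using fun s =>
    Ideal.mem_span_singleton'.1 (hφx (x * s) (Ideal.mem_span_singleton'.2 ⟨s, mul_comm s x⟩))
  have cancel : ∀ {a b : R}, a * x = b * x → a = b :=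
    fun h => (mul_cancel_right_mem_nonZeroDivisors hx).1 h
  refine ⟨α, ⟨fun a b => cancel ?_, fun r s => cancel ?_⟩, fun s => by rw [← hα, mul_comm]⟩
  · rw [hα, add_mul, hα, hα, mul_add, hφ.1]
  · rw [hα, mul_left_comm, hφ.2, ← hα, mul_assoc]

lemma map_mem_span_of_mem_span_pow (hφ : IsPeLinearMap p e φ) {S : Set R} {z : R}
    (hz : z ∈ Ideal.span ((· ^ p ^ e) '' S)) : φ z ∈ Ideal.span S := by
  suffices ∀ r, φ (r * z) ∈ Ideal.span S by simpa using this 1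
  induction hz using Submodule.span_induction with
  | mem w hw =>
    obtain ⟨t, ht, rfl⟩ := hw
    intro r
    rw [mul_comm, hφ.2]
    exact Ideal.mul_mem_right _ _ (Ideal.subset_span ht)
  | zero => simp [hφ.map_zero]
  | add w₁ w₂ _ _ ih₁ ih₂ =>
    intro r
    rw [mul_add, hφ.1]
    exact Ideal.add_mem _ (ih₁ r) (ih₂ r)
  | smul t w _ ih =>
    intro r
    simpa [smul_eq_mul, mul_assoc] using ih (r * t)

end IsPeLinearMap

section

variable {p e : ℕ} {R : Type*} [CommRing R]

lemma compatiblyFPureAlong_span_singleton {α : R → R} (hα : IsPeLinearMap p e α) (he : 1 ≤ e)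
    (hq : 1 ≤ p ^ e) {y : R} (hy : IsUnit (α (y ^ (p ^ e - 1)))) :
    CompatiblyFPureAlong p (Ideal.span {y}) := by
  obtain ⟨u, hu⟩ := hy
  have hpow : ∀ t, y ^ (p ^ e - 1) * (y * t) = y ^ p ^ e * t := fun t => by
    rw [← mul_assoc, ← pow_succ, Nat.sub_add_cancel hq]
  refine ⟨e, fun s => ↑u⁻¹ * α (y ^ (p ^ e - 1) * s), he, hα.mul_comp_mul _ _, ?_, ?_⟩ <;>
    beta_reduce
  · rw [mul_one, ← hu, Units.inv_mul]
  · intro z hz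
    obtain ⟨t, rfl⟩ := Ideal.mem_span_singleton'.1 hz
    rw [mul_comm t, hpow, hα.2, mul_left_comm]
    exact Ideal.mul_mem_right _ _ (Ideal.mem_span_singleton_self y)

lemma CompatiblyFPureAlong.admitsCartierSplitting_quotient {I : Ideal R}
    (h : CompatiblyFPureAlong p I) : AdmitsCartierSplitting p (R ⧸ I) := by
  obtain ⟨e, φ, he, hφ, h1, hI⟩ := h
  let mk := Ideal.Quotient.mk I
  let lift := Function.surjInv (Ideal.Quotient.mk_surjective (I := I))
  have hψ : ∀ s, mk (φ (lift (mk s))) = mk (φ s) := fun s => by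
    rw [Ideal.Quotient.eq, ← hφ.map_sub]
    exact hI _ (Ideal.Quotient.eq.1 (Function.surjInv_eq _ _))
  have hmk : ∀ a, mk (lift a) = a := Function.surjInv_eq _
  refine ⟨e, fun a => mk (φ (lift a)), he, ⟨fun a b => ?_, fun r s => ?_⟩, ?_⟩ <;> beta_reduce
  · rw [← hmk a, ← hmk b, ← map_add, hψ, hψ, hψ, hφ.1, map_add]
  · rw [← hmk r, ← hmk s, ← map_pow, ← map_mul, hψ, hψ, hφ.2, map_mul]
  · rw [← map_one mk, hψ, h1, map_one]

end

theorem compatiblyFPure_is_stable_general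
    (p : ℕ)
    (R : Type*) [CommRing R] [IsNoetherianRing R] [IsLocalRing R]
    (x : R) (hreg : x ∈ nonZeroDivisors R)
    (hcomp : CompatiblyFPureAlong p (Ideal.span {x})) :
    ∃ N : ℕ, 1 ≤ N ∧ ∀ δ ∈ maximalIdeal R ^ N,
      CompatiblyFPureAlong p (Ideal.span {x + δ}) ∧
      AdmitsCartierSplitting p (R ⧸ Ideal.span {x + δ}) := by
  obtain ⟨e, φ, he, hφ, hφ1, hφx⟩ := hcomp
  have hq := hφ.one_le_pow_of_map_one hφ1
  obtain ⟨α, hα, hφα⟩ := hφ.exists_map_mul_eq_mul hreg hφx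
  have hαx : α (x ^ (p ^ e - 1)) = 1 := by
    refine (mul_cancel_left_mem_nonZeroDivisors hreg).1 ?_
    rw [← hφα, ← pow_succ', Nat.sub_add_cancel hq, ← mul_one (x ^ _), hφ.2, hφ1]
  obtain ⟨T, hT⟩ := IsNoetherian.noetherian (maximalIdeal R)
  obtain ⟨N, hN⟩ : ∃ N, maximalIdeal R ^ N ≤ Ideal.span ((· ^ p ^ e) '' T) :=
    Ideal.exists_pow_le_of_le_radical_of_fg
      (hT ▸ Ideal.span_le.2 fun t ht => ⟨p ^ e, Ideal.subset_span ⟨t, ht, rfl⟩⟩) ⟨T, hT⟩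
  refine ⟨N + 1, by omega, fun δ hδ => ?_⟩
  have hunit : IsUnit (α ((x + δ) ^ (p ^ e - 1))) := by
    refine isUnit_of_mem_nonunits_one_sub_self _ ?_
    obtain ⟨c, hc⟩ := sub_dvd_pow_sub_pow (x + δ) x (p ^ e - 1)
    rw [← hαx, ← hα.map_sub, ← neg_sub, hc, add_sub_cancel_left, ← mul_neg,
      ← mem_maximalIdeal]
    exact hT ▸ hα.map_mem_span_of_mem_span_pow
      (Ideal.mul_mem_right _ _ (hN (Ideal.pow_le_pow_right N.le_succ hδ)))
  have h := compatiblyFPureAlong_span_singleton hα he hq hunit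
  exact ⟨h, h.admitsCartierSplitting_quotient⟩

/-- Let `(R,𝔪)` be an F-finite Noetherian local ring of prime
characteristic `p > 0` and `x ∈ 𝔪` a non-zerodivisor such that `R` is compatibly F-pure
along `(x)`.  Then there is an `N ≥ 1` such that for all `δ ∈ 𝔪 ^ N`, `R` is compatibly
F-pure along `(x + δ)`; in particular `R/(x+δ)` admits a Cartier map `ψ` with `ψ 1 = 1`,
i.e. `R/(x+δ)` is F-pure. -/
theorem compatiblyFPure_is_stable
    (p : ℕ) (hp : p.Prime)
    (R : Type*) [CommRing R] [IsNoetherianRing R] [IsLocalRing R] [CharP R p]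
    (hff : IsFFinite p R)
    (x : R) (hx : x ∈ maximalIdeal R) (hreg : x ∈ nonZeroDivisors R)
    (hcomp : CompatiblyFPureAlong p (Ideal.span {x})) :
    ∃ N : ℕ, 1 ≤ N ∧ ∀ δ ∈ maximalIdeal R ^ N,
      CompatiblyFPureAlong p (Ideal.span {x + δ}) ∧
      AdmitsCartierSplitting p (R ⧸ Ideal.span {x + δ}) :=
  compatiblyFPure_is_stable_general p R x hreg hcomp
end
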